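/- Let ρₗ, ρᵣ, a₁ˡ, a₁ʳ, bˡ, bʳ, cˡ, cʳ all be positive real numbers, let â₁, â₂, â₃ be real with â₁ ≠ 0, and let e₁,…,e₉ be the standard basis of ℝ⁹. Then the nine vectors v₁ = e₁ + √(ρₗ a₁ˡ) e₇, v₂ = e₁ − √(ρᵣ a₁ʳ) e₇, v₃ = e₄ + √(2ρₗ bˡ) e₈, v₄ = e₄ − √(2ρᵣ bʳ) e₈, v₅ = e₆ + √(2ρₗ cˡ) e₉, v₆ = e₆ − √(2ρᵣ cʳ) e₉, v₇ = −â₂e₁ + â₁e₂, v₈ = −â₃e₁ + â₁e₃, v₉ = e₅ form a basis of ℝ⁹. -/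
import Mathlib


open Real

/-- The nine wave vectors of the f-wave Riemann solver for the heterogeneous
Lagrangian fluid–solid system: the left-going eigenvectors `v₁, v₃, v₅` built from
the left state `(ρₗ, a₁ˡ, bˡ, cˡ)`, the right-going eigenvectors `v₂, v₄, v₆` built
from the right state `(ρᵣ, a₁ʳ, bʳ, cʳ)`, and the zero-speed eigenvectors
`v₇ = −â₂e₁ + â₁e₂`, `v₈ = −â₃e₁ + â₁e₃`, `v₉ = e₅`. -/
noncomputable def fwaveVecs (ρl ρr a1l a1r bl br cl cr ah₁ ah₂ ah₃ : ℝ) :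
    Fin 9 → (Fin 9 → ℝ) :=
  ![![1, 0, 0, 0, 0, 0, Real.sqrt (ρl * a1l), 0, 0],
    ![1, 0, 0, 0, 0, 0, -Real.sqrt (ρr * a1r), 0, 0],
    ![0, 0, 0, 1, 0, 0, 0, Real.sqrt (2 * ρl * bl), 0],
    ![0, 0, 0, 1, 0, 0, 0, -Real.sqrt (2 * ρr * br), 0],
    ![0, 0, 0, 0, 0, 1, 0, 0, Real.sqrt (2 * ρl * cl)],
    ![0, 0, 0, 0, 0, 1, 0, 0, -Real.sqrt (2 * ρr * cr)],
    ![-ah₂, ah₁, 0, 0, 0, 0, 0, 0, 0],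
    ![-ah₃, 0, ah₁, 0, 0, 0, 0, 0, 0],
    ![0, 0, 0, 0, 1, 0, 0, 0, 0]]

/-- If `ρₗ, ρᵣ, a₁ˡ, a₁ʳ, bˡ, bʳ, cˡ, cʳ > 0` and `â₁ ≠ 0`, the nine wave vectors
form a basis of `ℝ⁹`. -/
theorem fwaveVecs_basis (ρl ρr a1l a1r bl br cl cr ah₁ ah₂ ah₃ : ℝ)
    (hρl : 0 < ρl) (hρr : 0 < ρr) (ha1l : 0 < a1l) (ha1r : 0 < a1r)
    (hbl : 0 < bl) (hbr : 0 < br) (hcl : 0 < cl) (hcr : 0 < cr) (hah₁ : ah₁ ≠ 0) :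
    LinearIndependent ℝ (fwaveVecs ρl ρr a1l a1r bl br cl cr ah₁ ah₂ ah₃) ∧
    Submodule.span ℝ (Set.range (fwaveVecs ρl ρr a1l a1r bl br cl cr ah₁ ah₂ ah₃)) = ⊤ := by
  have hli : LinearIndependent ℝ (fwaveVecs ρl ρr a1l a1r bl br cl cr ah₁ ah₂ ah₃) := by
    rw [Fintype.linearIndependent_iff]
    intro g hg
    have s1 : 0 < Real.sqrt (ρl * a1l) := Real.sqrt_pos.mpr (by positivity)
    have s2 : 0 < Real.sqrt (ρr * a1r) := Real.sqrt_pos.mpr (by positivity)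
    have s3 : 0 < Real.sqrt (2 * ρl * bl) := Real.sqrt_pos.mpr (by positivity)
    have s4 : 0 < Real.sqrt (2 * ρr * br) := Real.sqrt_pos.mpr (by positivity)
    have s5 : 0 < Real.sqrt (2 * ρl * cl) := Real.sqrt_pos.mpr (by positivity)
    have s6 : 0 < Real.sqrt (2 * ρr * cr) := Real.sqrt_pos.mpr (by positivity)
    have h0 : g 0 * 1 + (g 1 * 1 + (g 2 * 0 + (g 3 * 0 + (g 4 * 0 + (g 5 * 0 + (g 6 * -ah₂ + (g 7 * -ah₃ + (g 8 * 0)))))))) = 0 := by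
      have := congrFun hg 0
      simp only [fwaveVecs, Fin.sum_univ_succ, Finset.sum_apply, Pi.smul_apply, smul_eq_mul,
        Pi.zero_apply, Finset.univ_eq_empty, Finset.sum_empty, add_zero] at this
      exact this
    have h1 : g 0 * 0 + (g 1 * 0 + (g 2 * 0 + (g 3 * 0 + (g 4 * 0 + (g 5 * 0 + (g 6 * ah₁ + (g 7 * 0 + (g 8 * 0)))))))) = 0 := by
      have := congrFun hg 1
      simp only [fwaveVecs, Fin.sum_univ_succ, Finset.sum_apply, Pi.smul_apply, smul_eq_mul,
        Pi.zero_apply, Finset.univ_eq_empty, Finset.sum_empty, add_zero] at this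
      exact this
    have h2 : g 0 * 0 + (g 1 * 0 + (g 2 * 0 + (g 3 * 0 + (g 4 * 0 + (g 5 * 0 + (g 6 * 0 + (g 7 * ah₁ + (g 8 * 0)))))))) = 0 := by
      have := congrFun hg 2
      simp only [fwaveVecs, Fin.sum_univ_succ, Finset.sum_apply, Pi.smul_apply, smul_eq_mul,
        Pi.zero_apply, Finset.univ_eq_empty, Finset.sum_empty, add_zero] at this
      exact this
    have h3 : g 0 * 0 + (g 1 * 0 + (g 2 * 1 + (g 3 * 1 + (g 4 * 0 + (g 5 * 0 + (g 6 * 0 + (g 7 * 0 + (g 8 * 0)))))))) = 0 := by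
      have := congrFun hg 3
      simp only [fwaveVecs, Fin.sum_univ_succ, Finset.sum_apply, Pi.smul_apply, smul_eq_mul,
        Pi.zero_apply, Finset.univ_eq_empty, Finset.sum_empty, add_zero] at this
      exact this
    have h4 : g 0 * 0 + (g 1 * 0 + (g 2 * 0 + (g 3 * 0 + (g 4 * 0 + (g 5 * 0 + (g 6 * 0 + (g 7 * 0 + (g 8 * 1)))))))) = 0 := by
      have := congrFun hg 4
      simp only [fwaveVecs, Fin.sum_univ_succ, Finset.sum_apply, Pi.smul_apply, smul_eq_mul,
        Pi.zero_apply, Finset.univ_eq_empty, Finset.sum_empty, add_zero] at this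
      exact this
    have h5 : g 0 * 0 + (g 1 * 0 + (g 2 * 0 + (g 3 * 0 + (g 4 * 1 + (g 5 * 1 + (g 6 * 0 + (g 7 * 0 + (g 8 * 0)))))))) = 0 := by
      have := congrFun hg 5
      simp only [fwaveVecs, Fin.sum_univ_succ, Finset.sum_apply, Pi.smul_apply, smul_eq_mul,
        Pi.zero_apply, Finset.univ_eq_empty, Finset.sum_empty, add_zero] at this
      exact this
    have h6 : g 0 * Real.sqrt (ρl * a1l) + (g 1 * -Real.sqrt (ρr * a1r) + (g 2 * 0 + (g 3 * 0 + (g 4 * 0 + (g 5 * 0 + (g 6 * 0 + (g 7 * 0 + (g 8 * 0)))))))) = 0 := by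
      have := congrFun hg 6
      simp only [fwaveVecs, Fin.sum_univ_succ, Finset.sum_apply, Pi.smul_apply, smul_eq_mul,
        Pi.zero_apply, Finset.univ_eq_empty, Finset.sum_empty, add_zero] at this
      exact this
    have h7 : g 0 * 0 + (g 1 * 0 + (g 2 * Real.sqrt (2 * ρl * bl) + (g 3 * -Real.sqrt (2 * ρr * br) + (g 4 * 0 + (g 5 * 0 + (g 6 * 0 + (g 7 * 0 + (g 8 * 0)))))))) = 0 := by
      have := congrFun hg 7
      simp only [fwaveVecs, Fin.sum_univ_succ, Finset.sum_apply, Pi.smul_apply, smul_eq_mul,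
        Pi.zero_apply, Finset.univ_eq_empty, Finset.sum_empty, add_zero] at this
      exact this
    have h8 : g 0 * 0 + (g 1 * 0 + (g 2 * 0 + (g 3 * 0 + (g 4 * Real.sqrt (2 * ρl * cl) + (g 5 * -Real.sqrt (2 * ρr * cr) + (g 6 * 0 + (g 7 * 0 + (g 8 * 0)))))))) = 0 := by
      have := congrFun hg 8
      simp only [fwaveVecs, Fin.sum_univ_succ, Finset.sum_apply, Pi.smul_apply, smul_eq_mul,
        Pi.zero_apply, Finset.univ_eq_empty, Finset.sum_empty, add_zero] at this
      exact this
    have hg6 : g 6 = 0 := by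
      have h : g 6 * ah₁ = 0 := by linear_combination h1
      exact (mul_eq_zero.mp h).resolve_right hah₁
    have hg7 : g 7 = 0 := by
      have h : g 7 * ah₁ = 0 := by linear_combination h2
      exact (mul_eq_zero.mp h).resolve_right hah₁
    have hg8 : g 8 = 0 := by linear_combination h4
    have ha01 : g 0 + g 1 = 0 := by linear_combination h0 + ah₂ * hg6 + ah₃ * hg7
    have hg0 : g 0 = 0 := by
      have h : g 0 * (Real.sqrt (ρl * a1l) + Real.sqrt (ρr * a1r)) = 0 := by linear_combination h6 + Real.sqrt (ρr * a1r) * ha01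
      exact (mul_eq_zero.mp h).resolve_right (by positivity)
    have hg1 : g 1 = 0 := by linarith
    have ha23 : g 2 + g 3 = 0 := by linear_combination h3
    have hg2 : g 2 = 0 := by
      have h : g 2 * (Real.sqrt (2 * ρl * bl) + Real.sqrt (2 * ρr * br)) = 0 := by linear_combination h7 + Real.sqrt (2 * ρr * br) * ha23
      exact (mul_eq_zero.mp h).resolve_right (by positivity)
    have hg3 : g 3 = 0 := by linarith
    have ha45 : g 4 + g 5 = 0 := by linear_combination h5
    have hg4 : g 4 = 0 := by
      have h : g 4 * (Real.sqrt (2 * ρl * cl) + Real.sqrt (2 * ρr * cr)) = 0 := by linear_combination h8 + Real.sqrt (2 * ρr * cr) * ha45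
      exact (mul_eq_zero.mp h).resolve_right (by positivity)
    have hg5 : g 5 = 0 := by linarith
    intro i
    fin_cases i <;> assumption
  refine ⟨hli, ?_⟩
  have hcard : Fintype.card (Fin 9) = Module.finrank ℝ (Fin 9 → ℝ) := by simp
  have hspan := (basisOfLinearIndependentOfCardEqFinrank hli hcard).span_eq
  rwa [coe_basisOfLinearIndependentOfCardEqFinrank] at hspan
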